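/- Let Y be a real-valued random variable with atomless law and cumulative distribution function F_Y, set Ỹ = F_Y(Y), and let Z be a random variable taking values in a finite set 𝒵 on the same probability space. Then Y and Z are independent if and only if for every z ∈ 𝒵 and every y ∈ [0,1]: E[ (1{Z = z} − P(Z = z))·γ_y^⊥(Ỹ) ] = 0. -/

import Mathlib

/-!
Write `T = F_Y(Y)`. For fixed `z`, the moment condition at `y` equals `y` times the difference of
the moment generating functions of `T` under `P` restricted to `{Z = z}` and under
`P(Z = z) • P`. As `T` is bounded these are entire, so agreement on `(0, 1]` gives agreement
everywhere, hence equality of the two laws of `T`; for all `z` this is independence of `T` and `Z`.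
Finally `T` determines `Y` up to null sets: `{Y ≤ a}` and `{T ≤ F_Y(a)}` differ only where `Y`
falls in a stretch to the right of `a` on which `F_Y` is flat, and such stretches carry no mass.
-/

open MeasureTheory ProbabilityTheory

/-- `γ_y^⊥(t) = y·exp(t·y) − (exp(y) − 1)`. -/
noncomputable def gammaPerp (y t : ℝ) : ℝ := y * Real.exp (t * y) - (Real.exp y - 1)

open Filter Set Topology

theorem MeasureTheory.Measure.map_eq_of_mgf_frequently_eq {Ω Ω' : Type*} {mΩ : MeasurableSpace Ω}
    {mΩ' : MeasurableSpace Ω'} {X : Ω → ℝ} {Y : Ω' → ℝ} {μ : Measure Ω} {μ' : Measure Ω'}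
    [IsFiniteMeasure μ] [IsFiniteMeasure μ'] (hX : AEMeasurable X μ) (hY : AEMeasurable Y μ')
    (hXi : integrableExpSet X μ = univ) (hYi : integrableExpSet Y μ' = univ) {t₀ : ℝ}
    (h : ∃ᶠ t in 𝓝[≠] t₀, mgf X μ t = mgf Y μ' t) :
    μ.map X = μ'.map Y := by
  refine Measure.ext_of_complexMGF_eq hX hY ?_
  have hXa : AnalyticOnNhd ℂ (complexMGF X μ) univ := by
    simpa [hXi] using analyticOnNhd_complexMGF (X := X) (μ := μ)
  have hYa : AnalyticOnNhd ℂ (complexMGF Y μ') univ := by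
    simpa [hYi] using analyticOnNhd_complexMGF (X := Y) (μ := μ')
  refine hXa.eq_of_frequently_eq hYa (z₀ := t₀) ?_
  have hofReal : Tendsto ((↑) : ℝ → ℂ) (𝓝[≠] t₀) (𝓝[≠] (t₀ : ℂ)) :=
    tendsto_nhdsWithin_of_tendsto_nhds_of_eventually_within _
      ((Complex.continuous_ofReal.tendsto t₀).mono_left nhdsWithin_le_nhds)
      (eventually_nhdsWithin_of_forall fun t ht => by simpa using ht)
  exact hofReal.frequently (h.mono fun t ht => by simp [complexMGF_ofReal, ht])

theorem MeasureTheory.measure_setOf_measure_Ioc_eq_zero (μ : Measure ℝ) (a : ℝ) :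
    μ {s | a < s ∧ μ (Ioc a s) = 0} = 0 := by
  set B := {s | a < s ∧ μ (Ioc a s) = 0}
  -- Every point of `B` except a maximum lies in some `Ioo a s` with `s ∈ B`, and countably many
  -- of these open intervals already cover their union.
  obtain ⟨C, hCB, hC, hCB_union⟩ :=
    TopologicalSpace.isOpen_biUnion_countable B (fun s => Ioo a s) fun _ _ => isOpen_Ioo
  set M := {x ∈ B | ∀ s ∈ B, s ≤ x}
  have hM : M.Subsingleton := fun x hx x' hx' => le_antisymm (hx'.2 x hx.1) (hx.2 x' hx'.1)
  have hcover : B ⊆ ⋃ s ∈ C ∪ M, Ioc a s := by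
    intro x hx
    by_cases hmax : ∃ s ∈ B, x < s
    · obtain ⟨s, hs, hxs⟩ := hmax
      have : x ∈ ⋃ s ∈ C, Ioo a s := hCB_union ▸ mem_biUnion hs ⟨hx.1, hxs⟩
      obtain ⟨t, ht, hxt⟩ := mem_iUnion₂.1 this
      exact mem_biUnion (Or.inl ht) (Ioo_subset_Ioc_self hxt)
    · exact mem_biUnion (Or.inr ⟨hx, fun s hs => not_lt.1 fun h => hmax ⟨s, hs, h⟩⟩) ⟨hx.1, le_rfl⟩
  refine measure_mono_null hcover ((measure_biUnion_null_iff (hC.union hM.countable)).2 ?_)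
  rintro s (hs | hs)
  exacts [(hCB hs).2, hs.1.2]

namespace ProbabilityTheory

theorem Iic_ae_eq_preimage_cdf (μ : Measure ℝ) [IsProbabilityMeasure μ] (a : ℝ) :
    (Iic a : Set ℝ) =ᵐ[μ] cdf μ ⁻¹' Iic (cdf μ a) := by
  have hsub : Iic a ⊆ cdf μ ⁻¹' Iic (cdf μ a) := fun s hs => monotone_cdf μ hs
  refine ae_eq_set.2 ⟨?_, ?_⟩
  · rw [Set.sdiff_eq_empty.2 hsub, measure_empty]
  · refine measure_mono_null (fun s ⟨hs, hsa⟩ => ?_) (measure_setOf_measure_Ioc_eq_zero μ a)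
    refine ⟨not_le.1 hsa, ?_⟩
    rw [← measure_cdf μ, StieltjesFunction.measure_Ioc, ENNReal.ofReal_eq_zero]
    exact sub_nonpos.2 hs

theorem _root_.MeasureTheory.Measure.eq_of_map_cdf_eq {μ ρ ν : Measure ℝ} [IsProbabilityMeasure μ]
    [IsFiniteMeasure ρ] (hρ : ρ ≪ μ) (hν : ν ≪ μ) (h : ρ.map (cdf μ) = ν.map (cdf μ)) :
    ρ = ν := by
  refine Measure.ext_of_Iic ρ ν fun a => ?_
  have hcdf := (monotone_cdf μ).measurable
  rw [measure_congr (hρ.ae_eq (Iic_ae_eq_preimage_cdf μ a)),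
    measure_congr (hν.ae_eq (Iic_ae_eq_preimage_cdf μ a)),
    ← Measure.map_apply hcdf measurableSet_Iic, h, Measure.map_apply hcdf measurableSet_Iic]

variable {Ω 𝒵 : Type*} {mΩ : MeasurableSpace Ω} [MeasurableSpace 𝒵] {P : Measure Ω}

theorem indepFun_iff_map_restrict_eq_smul_map {α : Type*} [MeasurableSpace α] [Countable 𝒵]
    [MeasurableSingletonClass 𝒵] {X : Ω → α} {Z : Ω → 𝒵} (hX : Measurable X) (hZ : Measurable Z) :
    IndepFun X Z P ↔ ∀ z, (P.restrict (Z ⁻¹' {z})).map X = P (Z ⁻¹' {z}) • P.map X := by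
  rw [indepFun_iff_measure_inter_preimage_eq_mul]
  refine ⟨fun h z => Measure.ext fun s hs => ?_, fun h s t hs _ => ?_⟩
  · rw [Measure.map_apply hX hs, Measure.restrict_apply (hX hs), Measure.smul_apply,
      Measure.map_apply hX hs, h s {z} hs (measurableSet_singleton z), smul_eq_mul, mul_comm]
  · have hpiece : ∀ z, P (X ⁻¹' s ∩ Z ⁻¹' {z}) = P (X ⁻¹' s) * P (Z ⁻¹' {z}) := fun z => by
      rw [← Measure.restrict_apply (hX hs), ← Measure.map_apply hX hs, h z, Measure.smul_apply,
        Measure.map_apply hX hs, smul_eq_mul, mul_comm]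
    have hdisj : t.PairwiseDisjoint fun z => Z ⁻¹' {z} := fun z _ z' _ hzz' =>
      (disjoint_singleton.2 hzz').preimage Z
    rw [← biUnion_preimage_singleton Z t, inter_iUnion₂,
      measure_biUnion t.to_countable (hdisj.mono fun _ => inter_subset_right)
        fun z _ => (hX hs).inter (hZ (measurableSet_singleton z)),
      measure_biUnion t.to_countable hdisj fun z _ => hZ (measurableSet_singleton z)]
    simp_rw [hpiece, ENNReal.tsum_mul_left]

theorem indepFun_cdf_comp_iff [IsProbabilityMeasure P] [Countable 𝒵] [MeasurableSingletonClass 𝒵]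
    {Y : Ω → ℝ} {Z : Ω → 𝒵} (hY : Measurable Y) (hZ : Measurable Z) :
    IndepFun (fun ω => cdf (P.map Y) (Y ω)) Z P ↔ IndepFun Y Z P := by
  have := Measure.isProbabilityMeasure_map (μ := P) hY.aemeasurable
  have hcdf := (monotone_cdf (P.map Y)).measurable
  have hT : Measurable fun ω => cdf (P.map Y) (Y ω) := hcdf.comp hY
  refine ⟨fun h => ?_, fun h => h.comp hcdf measurable_id⟩
  rw [indepFun_iff_map_restrict_eq_smul_map hT hZ] at h
  rw [indepFun_iff_map_restrict_eq_smul_map hY hZ]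
  intro z
  refine Measure.eq_of_map_cdf_eq (μ := P.map Y)
    (Measure.restrict_le_self.absolutelyContinuous.map hY) Measure.smul_absolutelyContinuous ?_
  rw [Measure.map_smul, Measure.map_map hcdf hY, Measure.map_map hcdf hY]
  exact h z

theorem integral_indicator_sub_mul_gammaPerp [IsProbabilityMeasure P] {S : Set Ω}
    (hS : MeasurableSet S) {T : Ω → ℝ} {y : ℝ} (hT : Integrable (fun ω => Real.exp (y * T ω)) P) :
    ∫ ω, (S.indicator 1 ω - P.real S) * gammaPerp y (T ω) ∂P
      = y * (mgf T (P.restrict S) y - mgf T (P S • P) y) := by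
  have hpoint : ∀ ω, (S.indicator 1 ω - P.real S) * gammaPerp y (T ω)
      = y * (S.indicator (fun ω => Real.exp (y * T ω)) ω - P.real S * Real.exp (y * T ω))
        - (Real.exp y - 1) * (S.indicator 1 ω - P.real S) := fun ω => by
    by_cases hω : ω ∈ S <;> simp [gammaPerp, hω, mul_comm (T ω)] <;> ring
  have hind : Integrable (S.indicator 1) P := (integrable_const (1 : ℝ)).indicator hS
  have hexpS : Integrable (S.indicator fun ω => Real.exp (y * T ω)) P := hT.indicator hS
  simp_rw [hpoint]
  rw [integral_sub, integral_const_mul, integral_const_mul, integral_sub, integral_sub,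
    integral_indicator hS, integral_const_mul, integral_indicator_one hS, integral_const,
    mgf_smul_measure]
  · simp [mgf, measureReal_def]
  exacts [hind, integrable_const _, hexpS, hT.const_mul _, (hexpS.sub (hT.const_mul _)).const_mul y,
    (hind.sub (integrable_const _)).const_mul _]

end ProbabilityTheory

theorem stmt17_general {Ω 𝒵 : Type*} [MeasurableSpace Ω] [MeasurableSpace 𝒵] [DecidableEq 𝒵]
    [MeasurableSingletonClass 𝒵] [Fintype 𝒵]
    (P : Measure Ω) [IsProbabilityMeasure P]
    (Y : Ω → ℝ) (Z : Ω → 𝒵) (hY : Measurable Y) (hZ : Measurable Z) :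
    IndepFun Y Z P ↔
      ∀ z : 𝒵, ∀ y ∈ Set.Icc (0:ℝ) 1,
        ∫ ω, ((if Z ω = z then (1:ℝ) else 0) - (P {ω' | Z ω' = z}).toReal) *
          gammaPerp y (((P.map Y) (Set.Iic (Y ω))).toReal) ∂P = 0 := by
  set T : Ω → ℝ := fun ω => cdf (P.map Y) (Y ω)
  have hT : Measurable T := (monotone_cdf _).measurable.comp hY
  have hT01 (ν : Measure Ω) : ∀ᵐ ω ∂ν, T ω ∈ Icc 0 1 :=
    ae_of_all _ fun ω => ⟨cdf_nonneg _ _, cdf_le_one _ _⟩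
  have hExp (ν : Measure Ω) [IsFiniteMeasure ν] : integrableExpSet T ν = univ :=
    eq_univ_of_forall fun _ => integrable_exp_mul_of_mem_Icc hT.aemeasurable (hT01 ν)
  have key (z : 𝒵) (y : ℝ) :
      ∫ ω, ((if Z ω = z then (1:ℝ) else 0) - (P {ω' | Z ω' = z}).toReal) *
          gammaPerp y (((P.map Y) (Iic (Y ω))).toReal) ∂P
        = y * (mgf T (P.restrict (Z ⁻¹' {z})) y - mgf T (P (Z ⁻¹' {z}) • P) y) := by
    have := Measure.isProbabilityMeasure_map (μ := P) hY.aemeasurable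
    rw [← integral_indicator_sub_mul_gammaPerp (hZ (measurableSet_singleton z))
      (integrable_exp_mul_of_mem_Icc hT.aemeasurable (hT01 P))]
    congr 1 with ω
    simp only [T, cdf_eq_real, measureReal_def]
    -- what is left is the decidability instance hidden in `Set.indicator`
    congr
  rw [← indepFun_cdf_comp_iff hY hZ, indepFun_iff_map_restrict_eq_smul_map hT hZ]
  simp_rw [key]
  refine ⟨fun h z y _ => ?_, fun h z => ?_⟩
  · rw [← mgf_id_map hT.aemeasurable, ← mgf_id_map hT.aemeasurable, Measure.map_smul, h z,
      sub_self, mul_zero]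
  · have := P.smul_finite (measure_ne_top P (Z ⁻¹' {z}))
    rw [← Measure.map_smul]
    refine Measure.map_eq_of_mgf_frequently_eq hT.aemeasurable hT.aemeasurable (hExp _) (hExp _)
      (t₀ := 1 / 2) ?_
    have hIoo : ∀ᶠ t in 𝓝[≠] (1 / 2 : ℝ), t ∈ Ioo 0 1 :=
      nhdsWithin_le_nhds (Ioo_mem_nhds (by norm_num) (by norm_num))
    refine hIoo.frequently.mono fun t ht => ?_
    exact sub_eq_zero.1 ((mul_eq_zero.1 (h z t (Ioo_subset_Icc_self ht))).resolve_left ht.1.ne')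

/-- For `Y` with atomless law, `Ỹ = F_Y(Y)`, and `Z` taking values in a finite set:
`Y ⊥ Z` if and only if `E[(1{Z = z} − P(Z = z))·γ_y^⊥(Ỹ)] = 0` for every `z` and
every `y ∈ [0,1]`. -/
theorem stmt17 {Ω 𝒵 : Type*} [MeasurableSpace Ω] [MeasurableSpace 𝒵] [DecidableEq 𝒵]
    [MeasurableSingletonClass 𝒵] [Fintype 𝒵]
    (P : Measure Ω) [IsProbabilityMeasure P]
    (Y : Ω → ℝ) (Z : Ω → 𝒵) (hY : Measurable Y) (hZ : Measurable Z)
    (hatomless : ∀ a : ℝ, (P.map Y) {a} = 0) :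
    IndepFun Y Z P ↔
      ∀ z : 𝒵, ∀ y ∈ Set.Icc (0:ℝ) 1,
        ∫ ω, ((if Z ω = z then (1:ℝ) else 0) - (P {ω' | Z ω' = z}).toReal) *
          gammaPerp y (((P.map Y) (Set.Iic (Y ω))).toReal) ∂P = 0 :=
  stmt17_general P Y Z hY hZ
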